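/- Let F be a field of characteristic zero, λ ∈ F of infinite multiplicative order (generic), and A = F[ℤ²,c] the noncommutative torus with U_2U_1 = λU_1U_2. Then the Hochschild homology of A is: HH_0(A) ≅ F, HH_1(A) ≅ F², HH_2(A) ≅ F, and HH_n(A) = 0 for n ≥ 3. -/

import Mathlib

noncomputable section

/-- `d₁(a) = (λU₂a − aU₂, λaU₁ − U₁a)` (Koszul differential for Hochschild
homology of the noncommutative torus). -/
def ncTorusD1 {F : Type*} [Field F] {A : Type*} [Ring A] [Algebra F A]
    (lam : F) (U₁ U₂ : A) : A →ₗ[F] A × A :=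
  LinearMap.prod
    (lam • LinearMap.mulLeft F U₂ - LinearMap.mulRight F U₂)
    (lam • LinearMap.mulRight F U₁ - LinearMap.mulLeft F U₁)

/-- `d₀(a, b) = aU₁ − U₁a + bU₂ − U₂b`. -/
def ncTorusD0 {F : Type*} [Field F] {A : Type*} [Ring A] [Algebra F A]
    (U₁ U₂ : A) : A × A →ₗ[F] A :=
  LinearMap.coprod
    (LinearMap.mulRight F U₁ - LinearMap.mulLeft F U₁)
    (LinearMap.mulRight F U₂ - LinearMap.mulLeft F U₂)

section aux

variable {F : Type*} [Field F] {A : Type*} [Ring A] [Algebra F A]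
variable (lam : Fˣ) (u₁ u₂ : Aˣ)
variable (hrel : (u₂ : A) * u₁ = (lam : F) • ((u₁ : A) * u₂))

include hrel

lemma nct_zc1 (n : ℤ) :
    ((u₂ ^ n : Aˣ) : A) * u₁ = ((lam : F) ^ n) • ((u₁ : A) * (u₂ ^ n : Aˣ)) := by
  have hl : (lam : F) ≠ 0 := Units.ne_zero lam
  induction n using Int.induction_on with
  | zero => simp
  | succ n ih =>
      have h1 : ((u₂ ^ ((n : ℤ) + 1) : Aˣ) : A) = ((u₂ ^ (n : ℤ) : Aˣ) : A) * u₂ := by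
        rw [zpow_add_one]; simp
      calc ((u₂ ^ ((n : ℤ) + 1) : Aˣ) : A) * u₁
          = ((u₂ ^ (n : ℤ) : Aˣ) : A) * ((u₂ : A) * u₁) := by rw [h1, mul_assoc]
        _ = (lam : F) • (((u₂ ^ (n : ℤ) : Aˣ) : A) * u₁ * u₂) := by
            rw [hrel, mul_smul_comm, mul_assoc]
        _ = ((lam : F) * (lam : F) ^ (n : ℤ)) • ((u₁ : A) * ((u₂ ^ ((n : ℤ) + 1) : Aˣ) : A)) := by
            rw [ih, smul_mul_assoc, smul_smul, h1, mul_assoc]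
        _ = ((lam : F) ^ ((n : ℤ) + 1)) • ((u₁ : A) * ((u₂ ^ ((n : ℤ) + 1) : Aˣ) : A)) := by
            congr 1; rw [mul_comm, ← zpow_add_one₀ hl]
  | pred n ih =>
      have h1 : ((u₂ ^ ((-n : ℤ) - 1) : Aˣ) : A) = ((u₂ ^ (-n : ℤ) : Aˣ) : A) * ↑u₂⁻¹ := by
        rw [zpow_sub_one]; simp
      have hinv : ((u₂⁻¹ : Aˣ) : A) * u₁ = ((lam : F)⁻¹) • ((u₁ : A) * ↑u₂⁻¹) := by
        have h2 : (u₁ : A) * ↑u₂⁻¹ = (lam : F) • (((u₂⁻¹ : Aˣ) : A) * u₁) := by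
          have := congrArg (fun x => ((u₂⁻¹ : Aˣ) : A) * x * ((u₂⁻¹ : Aˣ) : A)) hrel
          simpa [mul_assoc, mul_smul_comm, smul_mul_assoc, Units.inv_mul_cancel_left]
            using this
        rw [h2, smul_smul, inv_mul_cancel₀ hl, one_smul]
      calc ((u₂ ^ ((-n : ℤ) - 1) : Aˣ) : A) * u₁
          = ((u₂ ^ (-n : ℤ) : Aˣ) : A) * (((u₂⁻¹ : Aˣ) : A) * u₁) := by rw [h1, mul_assoc]
        _ = ((lam : F)⁻¹) • (((u₂ ^ (-n : ℤ) : Aˣ) : A) * u₁ * ↑u₂⁻¹) := by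
            rw [hinv, mul_smul_comm, mul_assoc]
        _ = ((lam : F)⁻¹ * (lam : F) ^ (-n : ℤ)) •
              ((u₁ : A) * ((u₂ ^ ((-n : ℤ) - 1) : Aˣ) : A)) := by
            rw [ih, smul_mul_assoc, smul_smul, h1, mul_assoc]
        _ = ((lam : F) ^ ((-n : ℤ) - 1)) • ((u₁ : A) * ((u₂ ^ ((-n : ℤ) - 1) : Aˣ) : A)) := by
            congr 1; rw [mul_comm, ← zpow_sub_one₀ hl]

lemma nct_zc (m n : ℤ) :
    ((u₂ ^ n : Aˣ) : A) * ((u₁ ^ m : Aˣ) : A)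
      = ((lam : F) ^ (n * m)) • (((u₁ ^ m : Aˣ) : A) * ((u₂ ^ n : Aˣ) : A)) := by
  have hl : (lam : F) ≠ 0 := Units.ne_zero lam
  induction m using Int.induction_on with
  | zero => simp
  | succ m ih =>
      have h1 : ((u₁ ^ ((m : ℤ) + 1) : Aˣ) : A) = ((u₁ ^ (m : ℤ) : Aˣ) : A) * u₁ := by
        rw [zpow_add_one]; simp
      calc ((u₂ ^ n : Aˣ) : A) * ((u₁ ^ ((m : ℤ) + 1) : Aˣ) : A)
          = ((u₂ ^ n : Aˣ) : A) * ((u₁ ^ (m : ℤ) : Aˣ) : A) * u₁ := by rw [h1, mul_assoc]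
        _ = ((lam : F) ^ (n * m)) • (((u₁ ^ (m : ℤ) : Aˣ) : A) * (((u₂ ^ n : Aˣ) : A) * u₁)) := by
            rw [ih, smul_mul_assoc, mul_assoc]
        _ = ((lam : F) ^ (n * m) * (lam : F) ^ n) •
              (((u₁ ^ ((m : ℤ) + 1) : Aˣ) : A) * ((u₂ ^ n : Aˣ) : A)) := by
            rw [nct_zc1 lam u₁ u₂ hrel n, mul_smul_comm, smul_smul, h1, mul_assoc]
        _ = ((lam : F) ^ (n * ((m : ℤ) + 1))) •
              (((u₁ ^ ((m : ℤ) + 1) : Aˣ) : A) * ((u₂ ^ n : Aˣ) : A)) := by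
            rw [← zpow_add₀ hl]; ring_nf
  | pred m ih =>
      have h1 : ((u₁ ^ ((-m : ℤ) - 1) : Aˣ) : A) = ((u₁ ^ (-m : ℤ) : Aˣ) : A) * ↑u₁⁻¹ := by
        rw [zpow_sub_one]; simp
      have hinv : ((u₂ ^ n : Aˣ) : A) * ↑u₁⁻¹
          = ((lam : F) ^ (-n)) • (((u₁⁻¹ : Aˣ) : A) * ((u₂ ^ n : Aˣ) : A)) := by
        have h2 := congrArg (fun x => ((u₁⁻¹ : Aˣ) : A) * x * ((u₁⁻¹ : Aˣ) : A))
          (nct_zc1 lam u₁ u₂ hrel n)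
        simp only [mul_assoc, mul_smul_comm, smul_mul_assoc] at h2
        rw [Units.inv_mul_cancel_left] at h2
        have h3 : ((u₁⁻¹ : Aˣ) : A) * (((u₂ ^ n : Aˣ) : A))
            = ((lam : F) ^ n) • (((u₂ ^ n : Aˣ) : A) * ↑u₁⁻¹) := by
          rw [Units.mul_inv, mul_one] at h2
          exact h2
        rw [h3, smul_smul, zpow_neg, inv_mul_cancel₀ (zpow_ne_zero _ hl), one_smul]
      calc ((u₂ ^ n : Aˣ) : A) * ((u₁ ^ ((-m : ℤ) - 1) : Aˣ) : A)
          = ((u₂ ^ n : Aˣ) : A) * ((u₁ ^ (-m : ℤ) : Aˣ) : A) * ↑u₁⁻¹ := by rw [h1, mul_assoc]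
        _ = ((lam : F) ^ (n * (-m : ℤ))) •
              (((u₁ ^ (-m : ℤ) : Aˣ) : A) * (((u₂ ^ n : Aˣ) : A) * ↑u₁⁻¹)) := by
            rw [ih, smul_mul_assoc, mul_assoc]
        _ = ((lam : F) ^ (n * (-m : ℤ)) * (lam : F) ^ (-n)) •
              (((u₁ ^ ((-m : ℤ) - 1) : Aˣ) : A) * ((u₂ ^ n : Aˣ) : A)) := by
            rw [hinv, mul_smul_comm, smul_smul, h1, mul_assoc]
        _ = ((lam : F) ^ (n * ((-m : ℤ) - 1))) •
              (((u₁ ^ ((-m : ℤ) - 1) : Aˣ) : A) * ((u₂ ^ n : Aˣ) : A)) := by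
            rw [← zpow_add₀ hl]; ring_nf

variable (bas : Module.Basis (ℤ × ℤ) F A)
variable (hbas : ∀ p : ℤ × ℤ, bas p = ((u₁ ^ p.1 * u₂ ^ p.2 : Aˣ) : A))

omit hrel
include hbas

lemma nct_u₁_mul (p : ℤ × ℤ) : (u₁ : A) * bas p = bas (p.1 + 1, p.2) := by
  rw [hbas, hbas]
  simp only [Units.val_mul, ← mul_assoc]
  congr 1
  rw [show p.1 + 1 = 1 + p.1 by ring, zpow_add, zpow_one, Units.val_mul]

lemma nct_mul_u₂ (p : ℤ × ℤ) : bas p * (u₂ : A) = bas (p.1, p.2 + 1) := by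
  rw [hbas, hbas]
  simp only [Units.val_mul, mul_assoc]
  congr 1
  rw [zpow_add_one, Units.val_mul]

include hrel

lemma nct_mul_u₁ (p : ℤ × ℤ) :
    bas p * (u₁ : A) = ((lam : F) ^ p.2) • bas (p.1 + 1, p.2) := by
  rw [hbas, hbas]
  simp only [Units.val_mul, mul_assoc]
  rw [nct_zc1 lam u₁ u₂ hrel, mul_smul_comm]
  congr 1
  rw [← mul_assoc, zpow_add_one, Units.val_mul]

lemma nct_u₂_mul (p : ℤ × ℤ) :
    (u₂ : A) * bas p = ((lam : F) ^ p.1) • bas (p.1, p.2 + 1) := by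
  rw [hbas, hbas]
  simp only [Units.val_mul, ← mul_assoc]
  have h := nct_zc lam u₁ u₂ hrel p.1 1
  rw [zpow_one] at h
  rw [h, one_mul, smul_mul_assoc, mul_assoc]
  congr 2
  rw [show p.2 + 1 = 1 + p.2 by ring, zpow_add, zpow_one, Units.val_mul]

omit hrel

lemma nct_repr_u₁_mul (x : A) (q : ℤ × ℤ) :
    bas.repr ((u₁ : A) * x) q = bas.repr x (q.1 - 1, q.2) := by
  have key : (Finsupp.lapply q ∘ₗ (bas.repr : A →ₗ[F] (ℤ × ℤ) →₀ F)) ∘ₗ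
        LinearMap.mulLeft F (u₁ : A)
      = Finsupp.lapply (q.1 - 1, q.2) ∘ₗ (bas.repr : A →ₗ[F] (ℤ × ℤ) →₀ F) := by
    apply bas.ext; intro p
    simp only [LinearEquiv.coe_coe, LinearMap.comp_apply, LinearMap.mulLeft_apply, nct_u₁_mul u₁ u₂ bas hbas,
      bas.repr_self, Finsupp.lapply_apply, Finsupp.single_apply]
    by_cases h : p = (q.1 - 1, q.2)
    · subst h; simp
    · rw [if_neg h, if_neg]
      rcases p with ⟨p1, p2⟩; rcases q with ⟨q1, q2⟩
      simp only [Prod.ext_iff] at h ⊢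
      omega
  exact LinearMap.congr_fun key x

lemma nct_repr_mul_u₂ (x : A) (q : ℤ × ℤ) :
    bas.repr (x * (u₂ : A)) q = bas.repr x (q.1, q.2 - 1) := by
  have key : (Finsupp.lapply q ∘ₗ (bas.repr : A →ₗ[F] (ℤ × ℤ) →₀ F)) ∘ₗ
        LinearMap.mulRight F (u₂ : A)
      = Finsupp.lapply (q.1, q.2 - 1) ∘ₗ (bas.repr : A →ₗ[F] (ℤ × ℤ) →₀ F) := by
    apply bas.ext; intro p
    simp only [LinearEquiv.coe_coe, LinearMap.comp_apply, LinearMap.mulRight_apply, nct_mul_u₂ u₁ u₂ bas hbas,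
      bas.repr_self, Finsupp.lapply_apply, Finsupp.single_apply]
    by_cases h : p = (q.1, q.2 - 1)
    · subst h; simp
    · rw [if_neg h, if_neg]
      rcases p with ⟨p1, p2⟩; rcases q with ⟨q1, q2⟩
      simp only [Prod.ext_iff] at h ⊢
      omega
  exact LinearMap.congr_fun key x

include hrel

lemma nct_repr_mul_u₁ (x : A) (q : ℤ × ℤ) :
    bas.repr (x * (u₁ : A)) q = (lam : F) ^ q.2 * bas.repr x (q.1 - 1, q.2) := by
  have key : (Finsupp.lapply q ∘ₗ (bas.repr : A →ₗ[F] (ℤ × ℤ) →₀ F)) ∘ₗ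
        LinearMap.mulRight F (u₁ : A)
      = ((lam : F) ^ q.2) • (Finsupp.lapply (q.1 - 1, q.2) ∘ₗ
          (bas.repr : A →ₗ[F] (ℤ × ℤ) →₀ F)) := by
    apply bas.ext; intro p
    simp only [LinearEquiv.coe_coe, LinearMap.comp_apply, LinearMap.mulRight_apply, LinearMap.smul_apply,
      nct_mul_u₁ lam u₁ u₂ hrel bas hbas, map_smul, bas.repr_self, Finsupp.lapply_apply,
      Finsupp.smul_apply, Finsupp.single_apply, smul_eq_mul]
    by_cases h : p = (q.1 - 1, q.2)
    · subst h; simp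
    · rw [if_neg, if_neg h, mul_zero, mul_zero]
      rcases p with ⟨p1, p2⟩; rcases q with ⟨q1, q2⟩
      simp only [Prod.ext_iff] at h ⊢
      omega
  exact LinearMap.congr_fun key x

lemma nct_repr_u₂_mul (x : A) (q : ℤ × ℤ) :
    bas.repr ((u₂ : A) * x) q = (lam : F) ^ q.1 * bas.repr x (q.1, q.2 - 1) := by
  have key : (Finsupp.lapply q ∘ₗ (bas.repr : A →ₗ[F] (ℤ × ℤ) →₀ F)) ∘ₗ
        LinearMap.mulLeft F (u₂ : A)
      = ((lam : F) ^ q.1) • (Finsupp.lapply (q.1, q.2 - 1) ∘ₗ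
          (bas.repr : A →ₗ[F] (ℤ × ℤ) →₀ F)) := by
    apply bas.ext; intro p
    simp only [LinearEquiv.coe_coe, LinearMap.comp_apply, LinearMap.mulLeft_apply, LinearMap.smul_apply,
      nct_u₂_mul lam u₁ u₂ hrel bas hbas, map_smul, bas.repr_self, Finsupp.lapply_apply,
      Finsupp.smul_apply, Finsupp.single_apply, smul_eq_mul]
    by_cases h : p = (q.1, q.2 - 1)
    · subst h; simp
    · rw [if_neg, if_neg h, mul_zero, mul_zero]
      rcases p with ⟨p1, p2⟩; rcases q with ⟨q1, q2⟩
      simp only [Prod.ext_iff] at h ⊢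
      omega
  exact LinearMap.congr_fun key x

lemma nct_d1_repr₁ (x : A) (q : ℤ × ℤ) :
    bas.repr ((ncTorusD1 (lam : F) (u₁ : A) (u₂ : A) x).1) q
      = ((lam : F) ^ (q.1 + 1) - 1) * bas.repr x (q.1, q.2 - 1) := by
  have hl : (lam : F) ≠ 0 := Units.ne_zero lam
  have h1 := nct_repr_u₂_mul lam u₁ u₂ hrel bas hbas x q
  have h2 := nct_repr_mul_u₂ u₁ u₂ bas hbas x q
  simp only [ncTorusD1, LinearMap.prod_apply, Function.prod, LinearMap.sub_apply,
    LinearMap.smul_apply, LinearMap.mulLeft_apply, LinearMap.mulRight_apply]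
  rw [map_sub, map_smul, Finsupp.sub_apply, Finsupp.smul_apply, h1, h2, smul_eq_mul,
    zpow_add_one₀ hl]
  ring

lemma nct_d1_repr₂ (x : A) (q : ℤ × ℤ) :
    bas.repr ((ncTorusD1 (lam : F) (u₁ : A) (u₂ : A) x).2) q
      = ((lam : F) ^ (q.2 + 1) - 1) * bas.repr x (q.1 - 1, q.2) := by
  have hl : (lam : F) ≠ 0 := Units.ne_zero lam
  have h1 := nct_repr_mul_u₁ lam u₁ u₂ hrel bas hbas x q
  have h2 := nct_repr_u₁_mul u₁ u₂ bas hbas x q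
  simp only [ncTorusD1, LinearMap.prod_apply, Function.prod, LinearMap.sub_apply,
    LinearMap.smul_apply, LinearMap.mulLeft_apply, LinearMap.mulRight_apply]
  rw [map_sub, map_smul, Finsupp.sub_apply, Finsupp.smul_apply, h1, h2, smul_eq_mul,
    zpow_add_one₀ hl]
  ring

lemma nct_d0_repr (ab : A × A) (q : ℤ × ℤ) :
    bas.repr (ncTorusD0 (F := F) (u₁ : A) (u₂ : A) ab) q
      = ((lam : F) ^ q.2 - 1) * bas.repr ab.1 (q.1 - 1, q.2)
        + (1 - (lam : F) ^ q.1) * bas.repr ab.2 (q.1, q.2 - 1) := by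
  have h1 := nct_repr_mul_u₁ lam u₁ u₂ hrel bas hbas ab.1 q
  have h2 := nct_repr_u₁_mul u₁ u₂ bas hbas ab.1 q
  have h3 := nct_repr_mul_u₂ u₁ u₂ bas hbas ab.2 q
  have h4 := nct_repr_u₂_mul lam u₁ u₂ hrel bas hbas ab.2 q
  simp only [ncTorusD0, LinearMap.coprod_apply, LinearMap.sub_apply,
    LinearMap.mulLeft_apply, LinearMap.mulRight_apply]
  rw [map_add, Finsupp.add_apply, map_sub, map_sub, Finsupp.sub_apply, Finsupp.sub_apply,
    h1, h2, h3, h4]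
  ring

end aux

/-- for the noncommutative torus `A = F[ℤ²,c]` over a field of
characteristic zero with `U₂U₁ = λU₁U₂` and `λ` generic (of infinite
multiplicative order), the Hochschild homology computed from the Koszul complex
`0 → A → A ⊕ A → A → 0` is `HH₂ ≅ F`, `HH₁ ≅ F²`, `HH₀ ≅ F` (and `HH_n = 0`
for `n ≥ 3`, the complex being zero there). -/
theorem stmt15 (F : Type*) [Field F] [CharZero F] (A : Type*) [Ring A] [Algebra F A]
    (lam : Fˣ) (hgen : ∀ k : ℤ, lam ^ k = 1 → k = 0)
    (u₁ u₂ : Aˣ)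
    (hrel : (u₂ : A) * u₁ = (lam : F) • ((u₁ : A) * u₂))
    (bas : Module.Basis (ℤ × ℤ) F A)
    (hbas : ∀ p : ℤ × ℤ, bas p = ((u₁ ^ p.1 * u₂ ^ p.2 : Aˣ) : A)) :
    (ncTorusD0 (F := F) (u₁ : A) (u₂ : A)).comp
        (ncTorusD1 (lam : F) (u₁ : A) (u₂ : A)) = 0 ∧
    Module.finrank F (LinearMap.ker (ncTorusD1 (F := F) (lam : F) (u₁ : A) (u₂ : A))) = 1 ∧
    Module.finrank F
        (LinearMap.ker (ncTorusD0 (F := F) (u₁ : A) (u₂ : A)) ⧸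
          Submodule.comap (LinearMap.ker (ncTorusD0 (F := F) (u₁ : A) (u₂ : A))).subtype
            (LinearMap.range (ncTorusD1 (F := F) (lam : F) (u₁ : A) (u₂ : A)))) = 2 ∧
    Module.finrank F
        (A ⧸ LinearMap.range (ncTorusD0 (F := F) (u₁ : A) (u₂ : A))) = 1 := by
  classical
  have hl : (lam : F) ≠ 0 := Units.ne_zero lam
  have hne : ∀ k : ℤ, k ≠ 0 → (lam : F) ^ k ≠ 1 := by
    intro k hk h
    exact hk (hgen k (Units.ext (by rw [Units.val_zpow_eq_zpow_val lam k, h, Units.val_one])))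
  have hne' : ∀ k : ℤ, k ≠ 0 → (lam : F) ^ k - 1 ≠ 0 := fun k hk =>
    sub_ne_zero.mpr (hne k hk)
  have hR0 := nct_d0_repr lam u₁ u₂ hrel bas hbas
  have hR1 := nct_d1_repr₁ lam u₁ u₂ hrel bas hbas
  have hR2 := nct_d1_repr₂ lam u₁ u₂ hrel bas hbas
  refine ⟨?_, ?_, ?_, ?_⟩
  · -- d₀ ∘ d₁ = 0
    apply LinearMap.ext; intro x
    apply bas.repr.injective
    ext q
    rw [LinearMap.comp_apply, LinearMap.zero_apply, map_zero, Finsupp.zero_apply,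
      hR0 _ q, hR1 x (q.1 - 1, q.2), hR2 x (q.1, q.2 - 1)]
    simp only []
    rw [show (q.1 - 1 + 1 : ℤ) = q.1 by ring, show (q.2 - 1 + 1 : ℤ) = q.2 by ring]
    ring
  · -- ker d₁ has dimension 1
    have hker : LinearMap.ker (ncTorusD1 (F := F) (lam : F) (u₁ : A) (u₂ : A))
        = Submodule.span F {bas (-1, -1)} := by
      apply le_antisymm
      · intro x hx
        rw [LinearMap.mem_ker] at hx
        have h1 : ∀ q : ℤ × ℤ, ((lam : F) ^ (q.1 + 1) - 1) * bas.repr x (q.1, q.2 - 1) = 0 := by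
          intro q; rw [← hR1 x q, hx]; simp
        have h2 : ∀ q : ℤ × ℤ, ((lam : F) ^ (q.2 + 1) - 1) * bas.repr x (q.1 - 1, q.2) = 0 := by
          intro q; rw [← hR2 x q, hx]; simp
        have hsupp : ∀ p : ℤ × ℤ, p ≠ (-1, -1) → bas.repr x p = 0 := by
          intro p hp
          by_cases hm : p.1 = -1
          · have hn : p.2 ≠ -1 := by
              intro h; exact hp (Prod.ext hm h)
            have h := h2 (p.1 + 1, p.2)
            simp only [] at h
            rw [show (p.1 + 1 - 1 : ℤ) = p.1 by ring] at h
            rcases mul_eq_zero.mp h with h | h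
            · exact absurd (sub_eq_zero.mp h) (hne _ (by omega))
            · rw [← Prod.mk.eta (p := p)]; exact h
          · have h := h1 (p.1, p.2 + 1)
            simp only [] at h
            rw [show (p.2 + 1 - 1 : ℤ) = p.2 by ring] at h
            rcases mul_eq_zero.mp h with h | h
            · exact absurd (sub_eq_zero.mp h) (hne _ (by omega))
            · rw [← Prod.mk.eta (p := p)]; exact h
        have hx2 : x = bas.repr x (-1, -1) • bas (-1, -1) := by
          apply bas.repr.injective
          rw [map_smul, bas.repr_self]
          ext q
          rw [Finsupp.smul_apply, Finsupp.single_apply, smul_eq_mul]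
          by_cases h : ((-1 : ℤ), (-1 : ℤ)) = q
          · rw [if_pos h, ← h, mul_one]
          · rw [if_neg h, mul_zero, hsupp q (fun hq => h hq.symm)]
        rw [hx2]
        exact Submodule.smul_mem _ _ (Submodule.mem_span_singleton_self _)
      · rw [Submodule.span_le, Set.singleton_subset_iff, SetLike.mem_coe, LinearMap.mem_ker]
        have c1 : (ncTorusD1 (F := F) (lam : F) (u₁ : A) (u₂ : A) (bas (-1, -1))).1 = 0 := by
          apply bas.repr.injective
          ext q
          rw [hR1 _ q, bas.repr_self, Finsupp.single_apply, map_zero, Finsupp.zero_apply]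
          by_cases h : ((-1 : ℤ), (-1 : ℤ)) = (q.1, q.2 - 1)
          · have hq1 : q.1 = -1 := by
              have := congrArg Prod.fst h; simp only [] at this; omega
            rw [hq1]
            norm_num
          · rw [if_neg h, mul_zero]
        have c2 : (ncTorusD1 (F := F) (lam : F) (u₁ : A) (u₂ : A) (bas (-1, -1))).2 = 0 := by
          apply bas.repr.injective
          ext q
          rw [hR2 _ q, bas.repr_self, Finsupp.single_apply, map_zero, Finsupp.zero_apply]
          by_cases h : ((-1 : ℤ), (-1 : ℤ)) = (q.1 - 1, q.2)
          · have hq2 : q.2 = -1 := by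
              have := congrArg Prod.snd h; simp only [] at this; omega
            rw [hq2]
            norm_num
          · rw [if_neg h, mul_zero]
        exact Prod.ext c1 c2
    rw [hker]
    exact finrank_span_singleton (bas.ne_zero _)
  · -- HH₁ has dimension 2
    set K := LinearMap.ker (ncTorusD0 (F := F) (u₁ : A) (u₂ : A)) with hKdef
    set Φ : A × A →ₗ[F] F × F :=
      LinearMap.prod
        ((Finsupp.lapply ((-1 : ℤ), (0 : ℤ)) : ((ℤ × ℤ) →₀ F) →ₗ[F] F) ∘ₗ
          (bas.repr : A →ₗ[F] (ℤ × ℤ) →₀ F) ∘ₗ LinearMap.fst F A A)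
        ((Finsupp.lapply ((0 : ℤ), (-1 : ℤ)) : ((ℤ × ℤ) →₀ F) →ₗ[F] F) ∘ₗ
          (bas.repr : A →ₗ[F] (ℤ × ℤ) →₀ F) ∘ₗ LinearMap.snd F A A) with hΦdef
    have hΦ : ∀ ab : A × A, Φ ab = (bas.repr ab.1 (-1, 0), bas.repr ab.2 (0, -1)) :=
      fun ab => rfl
    set Ψ : K →ₗ[F] F × F := Φ ∘ₗ K.subtype with hΨdef
    have hΨval : ∀ y : K, Ψ y = (bas.repr (y : A × A).1 (-1, 0), bas.repr (y : A × A).2 (0, -1)) :=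
      fun y => rfl
    have hkerΨ : Submodule.comap K.subtype
        (LinearMap.range (ncTorusD1 (F := F) (lam : F) (u₁ : A) (u₂ : A)))
        = LinearMap.ker Ψ := by
      apply le_antisymm
      · rintro y hmem
        rw [Submodule.mem_comap] at hmem
        obtain ⟨c, hc⟩ := hmem
        rw [LinearMap.mem_ker, hΨval]
        have e1 : bas.repr (K.subtype y).1 (-1, 0) = 0 := by
          rw [← hc, hR1 c ((-1 : ℤ), (0 : ℤ))]
          norm_num
        have e2 : bas.repr (K.subtype y).2 (0, -1) = 0 := by
          rw [← hc, hR2 c ((0 : ℤ), (-1 : ℤ))]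
          norm_num
        rw [Submodule.subtype_apply] at e1 e2
        rw [e1, e2]
        rfl
      · rintro y hmem
        rw [LinearMap.mem_ker, hΨval] at hmem
        have ha0 : bas.repr (y : A × A).1 (-1, 0) = 0 := congrArg Prod.fst hmem
        have hb0 : bas.repr (y : A × A).2 (0, -1) = 0 := congrArg Prod.snd hmem
        have hy : ncTorusD0 (F := F) (u₁ : A) (u₂ : A) (y : A × A) = 0 := y.2
        have hcoord : ∀ q : ℤ × ℤ,
            ((lam : F) ^ q.2 - 1) * bas.repr (y : A × A).1 (q.1 - 1, q.2)
              + (1 - (lam : F) ^ q.1) * bas.repr (y : A × A).2 (q.1, q.2 - 1) = 0 := by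
          intro q
          rw [← hR0 _ q, hy]
          simp
        have hA : ∀ n : ℤ, bas.repr (y : A × A).1 (-1, n) = 0 := by
          intro n
          by_cases hn : n = 0
          · rw [hn]; exact ha0
          · have h := hcoord (0, n)
            simp only [] at h
            rw [show ((0 : ℤ) - 1 : ℤ) = -1 by ring, zpow_zero] at h
            simp only [sub_self, zero_mul, add_zero] at h
            rcases mul_eq_zero.mp h with h | h
            · exact absurd (sub_eq_zero.mp h) (hne _ hn)
            · exact h
        have hB : ∀ m : ℤ, bas.repr (y : A × A).2 (m, -1) = 0 := by
          intro m
          by_cases hm : m = 0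
          · rw [hm]; exact hb0
          · have h := hcoord (m, 0)
            simp only [] at h
            rw [show ((0 : ℤ) - 1 : ℤ) = -1 by ring, zpow_zero] at h
            simp only [sub_self, zero_mul, zero_add] at h
            rcases mul_eq_zero.mp h with h | h
            · rw [sub_eq_zero] at h
              exact absurd h.symm (hne _ hm)
            · exact h
        have hAB : ∀ m n : ℤ, ((lam : F) ^ n - 1) * bas.repr (y : A × A).1 (m, n)
            = ((lam : F) ^ (m + 1) - 1) * bas.repr (y : A × A).2 (m + 1, n - 1) := by
          intro m n
          have h := hcoord (m + 1, n)
          simp only [] at h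
          rw [show (m + 1 - 1 : ℤ) = m by ring] at h
          linear_combination h
        set ra := bas.repr (y : A × A).1 with hra
        set rb := bas.repr (y : A × A).2 with hrb
        set f : ℤ × ℤ → F := fun p =>
          if p.1 = -1 then
            (if p.2 = -1 then 0 else rb (p.1 + 1, p.2) / ((lam : F) ^ (p.2 + 1) - 1))
          else ra (p.1, p.2 + 1) / ((lam : F) ^ (p.1 + 1) - 1) with hfdef
        have hfsupp : ∀ p : ℤ × ℤ, f p ≠ 0 →
            p ∈ ra.support.image (fun s => (s.1, s.2 - 1))
              ∪ rb.support.image (fun s => (s.1 - 1, s.2)) := by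
          intro p hp
          rw [Finset.mem_union]
          by_cases h1 : p.1 = -1
          · right
            rw [Finset.mem_image]
            refine ⟨(p.1 + 1, p.2), ?_, ?_⟩
            · rw [Finsupp.mem_support_iff]
              intro h0
              apply hp
              rw [hfdef]
              simp only [if_pos h1, h0, zero_div, ite_self]
            · simp only []
              exact Prod.ext (by omega) rfl
          · left
            rw [Finset.mem_image]
            refine ⟨(p.1, p.2 + 1), ?_, ?_⟩
            · rw [Finsupp.mem_support_iff]
              intro h0
              apply hp
              rw [hfdef]
              simp only [if_neg h1, h0, zero_div]
            · simp only []
              exact Prod.ext rfl (by omega)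
        set rc : (ℤ × ℤ) →₀ F := Finsupp.onFinset _ f hfsupp with hrcdef
        rw [Submodule.mem_comap]
        refine ⟨bas.repr.symm rc, ?_⟩
        have hrc : bas.repr (bas.repr.symm rc) = rc := bas.repr.apply_symm_apply rc
        have hrcval : ∀ p, rc p = f p := fun p => rfl
        refine Prod.ext ?_ ?_
        · apply bas.repr.injective
          ext q
          rw [hR1 _ q, hrc, hrcval]
          by_cases h : q.1 = -1
          · rw [h]
            norm_num
            have : ra q = 0 := by rw [← Prod.mk.eta (p := q), h]; exact hA q.2
            exact this.symm
          · rw [hfdef]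
            simp only [if_neg h]
            rw [show (q.2 - 1 + 1 : ℤ) = q.2 by ring, mul_comm,
              div_mul_cancel₀ _ (hne' (q.1 + 1) (by omega)), Prod.mk.eta]
            rfl
        · apply bas.repr.injective
          ext q
          rw [hR2 _ q, hrc, hrcval]
          by_cases h : q.1 = 0
          · have h1 : (q.1 - 1 : ℤ) = -1 := by omega
            rw [hfdef]
            simp only [h1, eq_self_iff_true, if_true]
            by_cases hq2 : q.2 = -1
            · simp only [hq2, eq_self_iff_true, if_true, mul_zero]
              have : rb q = 0 := by rw [← Prod.mk.eta (p := q), h, hq2]; exact hB 0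
              exact this.symm
            · simp only [if_neg hq2]
              rw [show (-1 + 1 : ℤ) = q.1 by omega, mul_comm,
                div_mul_cancel₀ _ (hne' (q.2 + 1) (by omega)),
                show ((q.1, q.2) : ℤ × ℤ) = q from Prod.mk.eta]
              rfl
          · rw [hfdef]
            have h1 : ¬ (q.1 - 1 = -1) := by omega
            simp only [if_neg h1]
            have h' := hAB (q.1 - 1) (q.2 + 1)
            rw [show (q.1 - 1 + 1 : ℤ) = q.1 by ring, show (q.2 + 1 - 1 : ℤ) = q.2 by ring] at h'
            rw [show (q.1 - 1 + 1 : ℤ) = q.1 by ring, mul_div_assoc', h',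
              mul_div_cancel_left₀ _ (hne' q.1 h), Prod.mk.eta]
            rfl
    have hv1 : ((bas (-1, 0), (0 : A)) : A × A) ∈ K := by
      rw [hKdef, LinearMap.mem_ker]
      apply bas.repr.injective
      ext q
      rw [hR0 _ q, map_zero, Finsupp.zero_apply]
      simp only [map_zero, Finsupp.zero_apply, mul_zero, add_zero]
      rw [bas.repr_self, Finsupp.single_apply]
      by_cases h : ((-1 : ℤ), (0 : ℤ)) = (q.1 - 1, q.2)
      · have hq2 : q.2 = 0 := by
          have := congrArg Prod.snd h; simp only [] at this; omega
        rw [hq2]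
        norm_num
      · rw [if_neg h, mul_zero]
    have hv2 : (((0 : A), bas (0, -1)) : A × A) ∈ K := by
      rw [hKdef, LinearMap.mem_ker]
      apply bas.repr.injective
      ext q
      rw [hR0 _ q]
      simp only [map_zero, Finsupp.zero_apply, mul_zero, zero_add]
      rw [bas.repr_self, Finsupp.single_apply]
      by_cases h : ((0 : ℤ), (-1 : ℤ)) = (q.1, q.2 - 1)
      · have hq1 : q.1 = 0 := by
          have := congrArg Prod.fst h; simp only [] at this; omega
        rw [hq1]
        norm_num
      · rw [if_neg h, mul_zero]
    have hsurj : LinearMap.range Ψ = ⊤ := by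
      rw [LinearMap.range_eq_top]
      intro st
      refine ⟨st.1 • ⟨_, hv1⟩ + st.2 • ⟨_, hv2⟩, ?_⟩
      rw [map_add, map_smul, map_smul, hΨval, hΨval]
      simp only [bas.repr_self, map_zero, Finsupp.zero_apply]
      rw [Finsupp.single_apply, Finsupp.single_apply]
      norm_num
    rw [hkerΨ, (LinearMap.quotKerEquivRange Ψ).finrank_eq, hsurj, finrank_top]
    simp [Module.finrank_prod]
  · -- HH₀ has dimension 1
    set φ : A →ₗ[F] F :=
      (Finsupp.lapply ((0 : ℤ), (0 : ℤ)) : ((ℤ × ℤ) →₀ F) →ₗ[F] F) ∘ₗ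
        (bas.repr : A →ₗ[F] (ℤ × ℤ) →₀ F) with hφdef
    have hφ : ∀ x : A, φ x = bas.repr x (0, 0) := fun x => rfl
    have hrange : LinearMap.range (ncTorusD0 (F := F) (u₁ : A) (u₂ : A)) = LinearMap.ker φ := by
      apply le_antisymm
      · rintro x ⟨ab, rfl⟩
        rw [LinearMap.mem_ker, hφ, hR0 ab ((0 : ℤ), (0 : ℤ))]
        norm_num
      · intro x hx
        rw [LinearMap.mem_ker, hφ] at hx
        set rx := bas.repr x with hrx
        set fa : ℤ × ℤ → F := fun p =>
          if p.2 = 0 then 0 else rx (p.1 + 1, p.2) / ((lam : F) ^ p.2 - 1) with hfadef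
        have hfas : ∀ p : ℤ × ℤ, fa p ≠ 0 → p ∈ rx.support.image (fun s => (s.1 - 1, s.2)) := by
          intro p hp
          rw [Finset.mem_image]
          refine ⟨(p.1 + 1, p.2), ?_, ?_⟩
          · rw [Finsupp.mem_support_iff]
            intro h0
            apply hp
            rw [hfadef]
            simp only [h0, zero_div, ite_self]
          · simp only []
            exact Prod.ext (by omega) rfl
        set fb : ℤ × ℤ → F := fun p =>
          if p.2 = -1 ∧ p.1 ≠ 0 then rx (p.1, 0) / (1 - (lam : F) ^ p.1) else 0 with hfbdef
        have hfbs : ∀ p : ℤ × ℤ, fb p ≠ 0 → p ∈ rx.support.image (fun s => (s.1, s.2 - 1)) := by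
          intro p hp
          rw [hfbdef] at hp
          simp only [] at hp
          by_cases hc : p.2 = -1 ∧ p.1 ≠ 0
          · rw [Finset.mem_image]
            refine ⟨(p.1, 0), ?_, ?_⟩
            · rw [Finsupp.mem_support_iff]
              intro h0
              apply hp
              rw [if_pos hc, h0, zero_div]
            · simp only []
              exact Prod.ext rfl (by omega)
          · exact absurd (if_neg hc) hp
        rw [LinearMap.mem_range]
        refine ⟨(bas.repr.symm (Finsupp.onFinset _ fa hfas),
          bas.repr.symm (Finsupp.onFinset _ fb hfbs)), ?_⟩
        apply bas.repr.injective
        ext q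
        rw [hR0 _ q]
        simp only [LinearEquiv.apply_symm_apply, Finsupp.onFinset_apply]
        rw [hfadef, hfbdef]
        by_cases h2 : q.2 = 0
        · simp only [h2, eq_self_iff_true, if_true, mul_zero, zero_add,
            show ((0 : ℤ) - 1 : ℤ) = -1 from by norm_num, true_and]
          by_cases h1 : q.1 = 0
          · rw [if_neg (by omega), mul_zero]
            rw [show ((0 : ℤ), (0 : ℤ)) = q from Prod.ext (by omega) (by omega)] at hx
            exact hx.symm
          · rw [if_pos h1, mul_comm, div_mul_cancel₀]
            · rw [show ((q.1, 0) : ℤ × ℤ) = q from Prod.ext rfl (by omega)]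
            · intro h0
              rw [sub_eq_zero] at h0
              exact hne q.1 h1 h0.symm
        · have hq21 : ¬ (q.2 - 1 = -1 ∧ q.1 ≠ 0) := by
            intro hcon; omega
          simp only [if_neg h2, if_neg hq21, mul_zero, add_zero]
          rw [show (q.1 - 1 + 1 : ℤ) = q.1 by ring, mul_comm,
            div_mul_cancel₀ _ (hne' q.2 h2), Prod.mk.eta]
    rw [hrange, (LinearMap.quotKerEquivRange φ).finrank_eq]
    have : LinearMap.range φ = ⊤ := by
      rw [LinearMap.range_eq_top]
      intro c
      refine ⟨c • bas (0, 0), ?_⟩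
      rw [hφ, map_smul, Finsupp.smul_apply, bas.repr_self, Finsupp.single_apply, if_pos rfl,
        smul_eq_mul, mul_one]
    rw [this, finrank_top]
    simp

end
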